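/- arXiv:1804.05565 — 4 statements merged into one kernel-verified Lean document; each statement's English description precedes it below -/
import Mathlib

section
/- Every harmonic L²-function on ℝ × T³ (with the product Riemannian metric, T³ a flat 3-torus) is identically zero. -/
/-!
Let `A(t) = ∫_{T³} f(t, x)² dx`. Differentiating twice under the integral and using
`∂ₜ²f = -∑ⱼ ∂ⱼ²f`, one gets `A'' = 2 ∫ (∂ₜf)² + 2 ∑ⱼ ∫ (∂ⱼf)² ≥ 0`, because on the torus
`∫ f ∂ⱼ²f = -∫ (∂ⱼf)²`: the integral of a derivative of a periodic function over a fundamental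
domain vanishes, since the translates of a fundamental domain are fundamental domains. Thus `A` is
a nonnegative integrable function on `ℝ` with monotone derivative, which forces `A = 0`; then `f`
vanishes by continuity and periodicity.
-/

open MeasureTheory

noncomputable def dir4 : Fin 4 → ℝ × EuclideanSpace ℝ (Fin 3) :=
  ![(1, 0), (0, EuclideanSpace.single 0 1), (0, EuclideanSpace.single 1 1),
    (0, EuclideanSpace.single 2 1)]

open Set Submodule Function Metric Bornology Pointwise

theorem eq_zero_of_integrable_of_nonneg_of_monotone_deriv {A A' : ℝ → ℝ}
    (hA : ∀ t, HasDerivAt A (A' t) t) (hA' : Monotone A') (h0 : 0 ≤ A) (hint : Integrable A) :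
    A = 0 := by
  funext t₀
  by_contra hne
  have hpos : 0 < A t₀ := (h0 t₀).lt_of_ne' hne
  have hA_cont : Continuous A := continuous_iff_continuousAt.2 fun t => (hA t).continuousAt
  suffices ∃ s : Set ℝ, volume s = ⊤ ∧ ∀ t ∈ s, A t₀ ≤ A t by
    obtain ⟨s, hs, hle⟩ := this
    refine (hint.measure_norm_ge_lt_top hpos).ne (top_unique (hs ▸ measure_mono fun t ht => ?_))
    exact (hle t ht).trans (Real.le_norm_self _)
  rcases le_or_gt 0 (A' t₀) with h | h
  · refine ⟨Ici t₀, Real.volume_Ici, fun t ht => ?_⟩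
    refine monotoneOn_of_hasDerivWithinAt_nonneg (convex_Ici t₀) hA_cont.continuousOn
      (fun t _ => (hA t).hasDerivWithinAt) (fun t ht => ?_) self_mem_Ici ht ht
    exact h.trans (hA' (interior_subset ht))
  · refine ⟨Iic t₀, Real.volume_Iic, fun t ht => ?_⟩
    refine antitoneOn_of_hasDerivWithinAt_nonpos (convex_Iic t₀) hA_cont.continuousOn
      (fun t _ => (hA t).hasDerivWithinAt) (fun t ht => ?_) ht self_mem_Iic ht
    exact (hA' (mem_Iic.1 (interior_subset ht))).trans h.le

section BoundedDomain

variable {X G : Type*} [PseudoMetricSpace X] [ProperSpace X] [MeasurableSpace X]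
  [OpensMeasurableSpace X] {μ : Measure X} [IsFiniteMeasureOnCompacts μ]
  [NormedAddCommGroup G] {s : Set X}

theorem Continuous.integrableOn_of_isBounded {g : X → G} (hg : Continuous g) (hs : IsBounded s) :
    IntegrableOn g s μ :=
  (hg.locallyIntegrable.integrableOn_isCompact hs.isCompact_closure).mono_set subset_closure

variable [NormedSpace ℝ G]

theorem hasDerivAt_setIntegral_of_continuous {F F' : ℝ → X → G}
    (hF : Continuous fun p : ℝ × X => F p.1 p.2)
    (hF' : Continuous fun p : ℝ × X => F' p.1 p.2)
    (hd : ∀ t x, HasDerivAt (F · x) (F' t x) t) (hs : IsBounded s) (t₀ : ℝ) :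
    HasDerivAt (fun t => ∫ x in s, F t x ∂μ) (∫ x in s, F' t₀ x ∂μ) t₀ := by
  have hK : IsCompact (closedBall t₀ 1 ×ˢ closure s) :=
    (isCompact_closedBall t₀ 1).prod hs.isCompact_closure
  obtain ⟨C, hC⟩ := hK.exists_bound_of_continuousOn hF'.continuousOn
  have : IsFiniteMeasure (μ.restrict s) :=
    isFiniteMeasure_restrict.2 hs.measure_lt_top.ne
  refine (hasDerivAt_integral_of_dominated_loc_of_deriv_le (bound := fun _ => C)
    (closedBall_mem_nhds t₀ one_pos) (.of_forall fun t => ?_) ?_ ?_ ?_ (integrable_const C)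
    (.of_forall fun x t _ => hd t x)).2
  · exact (hF.comp (Continuous.prodMk_right t)).aestronglyMeasurable
  · exact (hF.comp (Continuous.prodMk_right t₀)).integrableOn_of_isBounded hs
  · exact (hF'.comp (Continuous.prodMk_right t₀)).aestronglyMeasurable
  · filter_upwards [ae_restrict_of_ae_restrict_of_subset subset_closure
      (ae_restrict_mem isClosed_closure.measurableSet)] with x hx t ht
    exact hC (t, x) ⟨ht, hx⟩

end BoundedDomain

theorem Function.Periodic.fderiv {𝕜 E F : Type*} [NontriviallyNormedField 𝕜] [NormedAddCommGroup E]
    [NormedSpace 𝕜 E] [NormedAddCommGroup F] [NormedSpace 𝕜 F] {g : E → F} {c : E}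
    (h : Periodic g c) : Periodic (fderiv 𝕜 g) c := fun x => by
  rw [← fderiv_comp_add_right, show (fun y => g (y + c)) = g from funext h]

namespace ZSpan

variable {E ι : Type*} [NormedAddCommGroup E] [NormedSpace ℝ E] (b : Module.Basis ι ℝ E)

theorem apply_vadd_of_periodic {α : Type*} {g : E → α} (hg : ∀ w ∈ span ℤ (range b), Periodic g w)
    (γ : (span ℤ (range b)).toAddSubgroup) (x : E) : g (γ +ᵥ x) = g x := by
  rw [AddSubgroup.vadd_def, vadd_eq_add, add_comm]
  exact hg γ γ.2 x

variable [FiniteDimensional ℝ E] [MeasurableSpace E] [BorelSpace E] [Fintype ι] {μ : Measure E}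
  {G : Type*} [NormedAddCommGroup G] [NormedSpace ℝ G]

instance : Countable (span ℤ (range b)).toAddSubgroup :=
  inferInstanceAs (Countable (span ℤ (range b)))

theorem setIntegral_fundamentalDomain_comp_add [μ.IsAddLeftInvariant] {g : E → G}
    (hg : ∀ w ∈ span ℤ (range b), Periodic g w) (v : E) :
    ∫ x in fundamentalDomain b, g (x + v) ∂μ = ∫ x in fundamentalDomain b, g x ∂μ := by
  have hD := ZSpan.isAddFundamentalDomain' b μ
  calc ∫ x in fundamentalDomain b, g (x + v) ∂μ = ∫ x in v +ᵥ fundamentalDomain b, g x ∂μ := by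
        simp only [← image_vadd, vadd_eq_add]
        rw [(measurePreserving_add_left μ v).setIntegral_image_emb (measurableEmbedding_addLeft v)]
        simp only [add_comm v]
    _ = _ := (hD.vadd_of_comm v).setIntegral_eq hD (apply_vadd_of_periodic b hg)

theorem setIntegral_fundamentalDomain_fderiv_apply_eq_zero [μ.IsAddHaarMeasure] {g : E → G}
    (hg : ContDiff ℝ 1 g) (hper : ∀ w ∈ span ℤ (range b), Periodic g w) (v : E) :
    ∫ x in fundamentalDomain b, fderiv ℝ g x v ∂μ = 0 := by
  have hg' : Continuous fun x => fderiv ℝ g x v :=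
    (hg.continuous_fderiv one_ne_zero).clm_apply continuous_const
  have hd := hasDerivAt_setIntegral_of_continuous (μ := μ) (F := fun s x => g (x + s • v))
    (F' := fun s x => fderiv ℝ g (x + s • v) v) (by fun_prop) (by fun_prop) (fun s x => ?_)
    (fundamentalDomain_isBounded b) 0
  · simp_rw [setIntegral_fundamentalDomain_comp_add b hper] at hd
    simpa using hd.unique (hasDerivAt_const 0 _)
  · simpa [comp_def] using (hg.differentiable one_ne_zero _).hasFDerivAt.comp_hasDerivAt s
      (((hasDerivAt_id s).smul_const v).const_add x)

theorem eq_zero_of_setIntegral_fundamentalDomain_eq_zero [μ.IsAddHaarMeasure] {g : E → ℝ}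
    (hg : Continuous g) (hg0 : 0 ≤ g) (hper : ∀ w ∈ span ℤ (range b), Periodic g w)
    (h : ∫ x in fundamentalDomain b, g x ∂μ = 0) : g = 0 := by
  have hae := (integral_eq_zero_iff_of_nonneg hg0
    (hg.integrableOn_of_isBounded (fundamentalDomain_isBounded b))).1 h
  set S := {x | g x ≠ 0}
  have hS : IsOpen S := isOpen_ne_fun hg continuous_const
  have hSD : μ (S ∩ fundamentalDomain b) = 0 := by
    have : μ.restrict (fundamentalDomain b) S = 0 := ae_iff.1 hae
    rwa [Measure.restrict_apply hS.measurableSet] at this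
  have hinv (γ : (span ℤ (range b)).toAddSubgroup) : γ +ᵥ S = S := by
    ext x
    simp [S, mem_vadd_set_iff_neg_vadd_mem, apply_vadd_of_periodic b hper]
  have hnull := (ZSpan.isAddFundamentalDomain' b μ).measure_zero_of_invariant S hinv hSD
  funext x
  by_contra hx
  exact ((hS.measure_eq_zero_iff μ).1 hnull).subset hx

end ZSpan

theorem Function.Periodic.slice_snd {E α : Type*} [AddMonoid E] {g : ℝ × E → α} {v : E}
    (hg : Periodic g (0, v)) (t : ℝ) : Periodic (fun y => g (t, y)) v := fun y => by
  simpa using hg (t, y)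

section Slice

variable {E F : Type*} [NormedAddCommGroup E] [NormedSpace ℝ E] [NormedAddCommGroup F]
  [NormedSpace ℝ F] {g : ℝ × E → F} {t : ℝ} {x : E}

theorem hasDerivAt_slice_fst (hg : DifferentiableAt ℝ g (t, x)) :
    HasDerivAt (fun s => g (s, x)) (fderiv ℝ g (t, x) (1, 0)) t :=
  hg.hasFDerivAt.comp_hasDerivAt t ((hasDerivAt_id t).prodMk (hasDerivAt_const t x))

theorem fderiv_slice_snd_apply (hg : DifferentiableAt ℝ g (t, x)) (v : E) :
    fderiv ℝ (fun y => g (t, y)) x v = fderiv ℝ g (t, x) (0, v) := by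
  rw [show fderiv ℝ (fun y => g (t, y)) x = _ from
    (hg.hasFDerivAt.comp x (hasFDerivAt_prodMk_right t x)).fderiv]
  simp

theorem ContDiff.contDiff_one_fderiv_apply {f : ℝ × E → ℝ} (hf : ContDiff ℝ 2 f) (w : ℝ × E) :
    ContDiff ℝ 1 fun q => fderiv ℝ f q w :=
  (hf.fderiv_right (m := 1) (by norm_num)).clm_apply contDiff_const

end Slice

section HarmonicOnSlab

variable {E ι : Type*} [NormedAddCommGroup E] [NormedSpace ℝ E] [FiniteDimensional ℝ E]
  [MeasurableSpace E] [BorelSpace E] [Fintype ι] (b : Module.Basis ι ℝ E) (μ : Measure E)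
  [μ.IsAddHaarMeasure] {f : ℝ × E → ℝ}

theorem setIntegral_fundamentalDomain_sq_fderiv_add_mul_fderiv_fderiv_eq_zero
    (hf : ContDiff ℝ 2 f) (hper : ∀ w ∈ span ℤ (range b), Periodic f (0, w)) (t : ℝ) (v : E) :
    ∫ x in ZSpan.fundamentalDomain b, fderiv ℝ f (t, x) (0, v) ^ 2
      + f (t, x) * fderiv ℝ (fun q => fderiv ℝ f q (0, v)) (t, x) (0, v) ∂μ = 0 := by
  set fv := fun q => fderiv ℝ f q (0, v)
  have hfv : ContDiff ℝ 1 fv := hf.contDiff_one_fderiv_apply (0, v)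
  have hf_slice : ContDiff ℝ 1 fun y => f (t, y) :=
    (hf.of_le (by norm_num)).comp (contDiff_prodMk_right t)
  have hfv_slice : ContDiff ℝ 1 fun y => fv (t, y) := hfv.comp (contDiff_prodMk_right t)
  have hper' : ∀ w ∈ span ℤ (range b), Periodic (fun y => f (t, y) * fv (t, y)) w := fun w hw =>
    ((hper w hw).slice_snd t).mul (((hper w hw).fderiv.slice_snd t).comp fun L => L (0, v))
  refine (integral_congr_ae (.of_forall fun x => ?_)).trans
    (ZSpan.setIntegral_fundamentalDomain_fderiv_apply_eq_zero b (hf_slice.mul hfv_slice) hper' v)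
  have hfd : DifferentiableAt ℝ f (t, x) := hf.differentiable (by norm_num) _
  have hfvd : DifferentiableAt ℝ fv (t, x) := hfv.differentiable one_ne_zero _
  rw [fderiv_fun_mul (hf_slice.differentiable one_ne_zero x)
    (hfv_slice.differentiable one_ne_zero x)]
  simp only [add_apply, smul_apply, smul_eq_mul, fderiv_slice_snd_apply hfd,
    fderiv_slice_snd_apply hfvd, fv]
  ring

theorem setIntegral_fundamentalDomain_sq_fderiv_fst_add_mul_nonneg (hf : ContDiff ℝ 2 f)
    (hper : ∀ w ∈ span ℤ (range b), Periodic f (0, w)) {κ : Type*} [Fintype κ] (v : κ → E)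
    (hharm : ∀ p, fderiv ℝ (fun q => fderiv ℝ f q (1, 0)) p (1, 0)
      + ∑ j, fderiv ℝ (fun q => fderiv ℝ f q (0, v j)) p (0, v j) = 0) (t : ℝ) :
    0 ≤ ∫ x in ZSpan.fundamentalDomain b, fderiv ℝ f (t, x) (1, 0) ^ 2
      + f (t, x) * fderiv ℝ (fun q => fderiv ℝ f q (1, 0)) (t, x) (1, 0) ∂μ := by
  set d : ℝ × E → ℝ × E → ℝ := fun w q => fderiv ℝ f q w
  set d2 : ℝ × E → ℝ × E → ℝ := fun w q => fderiv ℝ (d w) q w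
  have hd (w : ℝ × E) : Continuous (d w) := (hf.contDiff_one_fderiv_apply w).continuous
  have hd2 (w : ℝ × E) : Continuous (d2 w) :=
    ((hf.contDiff_one_fderiv_apply w).continuous_fderiv one_ne_zero).clm_apply continuous_const
  have hint {g : E → ℝ} (hg : Continuous g) : IntegrableOn g (ZSpan.fundamentalDomain b) μ :=
    hg.integrableOn_of_isBounded (ZSpan.fundamentalDomain_isBounded b)
  have hpt (x : E) : d (1, 0) (t, x) ^ 2 + f (t, x) * d2 (1, 0) (t, x)
      = (d (1, 0) (t, x) ^ 2 + ∑ j, d (0, v j) (t, x) ^ 2)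
        - ∑ j, (d (0, v j) (t, x) ^ 2 + f (t, x) * d2 (0, v j) (t, x)) := by
    rw [Finset.sum_add_distrib, ← Finset.mul_sum]
    linear_combination f (t, x) * hharm (t, x)
  change 0 ≤ ∫ x in ZSpan.fundamentalDomain b, d (1, 0) (t, x) ^ 2 + f (t, x) * d2 (1, 0) (t, x) ∂μ
  simp_rw [hpt]
  rw [integral_sub (hint (by fun_prop)) (integrable_finsetSum _ fun j _ => hint (by fun_prop)),
    integral_finsetSum _ fun j _ => hint (by fun_prop)]
  rw [Finset.sum_eq_zero fun j _ =>
    setIntegral_fundamentalDomain_sq_fderiv_add_mul_fderiv_fderiv_eq_zero b μ hf hper t (v j),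
    sub_zero]
  exact integral_nonneg fun x => by positivity

theorem setIntegral_fundamentalDomain_sq_eq_zero_of_harmonic (hf : ContDiff ℝ 2 f)
    (hper : ∀ w ∈ span ℤ (range b), Periodic f (0, w)) {κ : Type*} [Fintype κ] (v : κ → E)
    (hharm : ∀ p, fderiv ℝ (fun q => fderiv ℝ f q (1, 0)) p (1, 0)
      + ∑ j, fderiv ℝ (fun q => fderiv ℝ f q (0, v j)) p (0, v j) = 0)
    (hL2 : Integrable (fun p => f p ^ 2)
      ((volume : Measure ℝ).prod (μ.restrict (ZSpan.fundamentalDomain b)))) (t : ℝ) :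
    ∫ x in ZSpan.fundamentalDomain b, f (t, x) ^ 2 ∂μ = 0 := by
  set D := ZSpan.fundamentalDomain b
  set ft := fun q => fderiv ℝ f q (1, 0)
  have hft : ContDiff ℝ 1 ft := hf.contDiff_one_fderiv_apply (1, 0)
  have hfd : Differentiable ℝ f := hf.differentiable (by norm_num)
  have hftd : Differentiable ℝ ft := hft.differentiable one_ne_zero
  have hftt : Continuous fun q => fderiv ℝ ft q (1, 0) :=
    (hft.continuous_fderiv one_ne_zero).clm_apply continuous_const
  have hA (τ : ℝ) : HasDerivAt (fun t => ∫ x in D, f (t, x) ^ 2 ∂μ)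
      (∫ x in D, 2 * (f (τ, x) * ft (τ, x)) ∂μ) τ := by
    refine hasDerivAt_setIntegral_of_continuous (F := fun t x => f (t, x) ^ 2)
      (F' := fun t x => 2 * (f (t, x) * ft (t, x))) (by fun_prop) (by fun_prop) (fun s x => ?_)
      (ZSpan.fundamentalDomain_isBounded b) τ
    exact ((hasDerivAt_slice_fst (hfd _)).pow 2).congr_deriv (by ring)
  have hA' (τ : ℝ) : HasDerivAt (fun t => ∫ x in D, 2 * (f (t, x) * ft (t, x)) ∂μ)
      (∫ x in D, 2 * (ft (τ, x) ^ 2 + f (τ, x) * fderiv ℝ ft (τ, x) (1, 0)) ∂μ) τ := by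
    refine hasDerivAt_setIntegral_of_continuous (F := fun t x => 2 * (f (t, x) * ft (t, x)))
      (F' := fun t x => 2 * (ft (t, x) ^ 2 + f (t, x) * fderiv ℝ ft (t, x) (1, 0)))
      (by fun_prop) (by fun_prop) (fun s x => ?_) (ZSpan.fundamentalDomain_isBounded b) τ
    exact (((hasDerivAt_slice_fst (hfd _)).mul (hasDerivAt_slice_fst (hftd _))).const_mul 2)
      |>.congr_deriv (by ring)
  have hmono : Monotone fun t => ∫ x in D, 2 * (f (t, x) * ft (t, x)) ∂μ :=
    monotone_of_hasDerivAt_nonneg hA' fun τ => by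
      rw [integral_const_mul]
      exact mul_nonneg zero_le_two
        (setIntegral_fundamentalDomain_sq_fderiv_fst_add_mul_nonneg b μ hf hper v hharm τ)
  exact congrFun (eq_zero_of_integrable_of_nonneg_of_monotone_deriv hA hmono
    (fun t => integral_nonneg fun x => sq_nonneg _) hL2.integral_prod_left) t

theorem eq_zero_of_harmonic_of_periodic_of_sq_integrable (hf : ContDiff ℝ 2 f)
    (hper : ∀ w ∈ span ℤ (range b), Periodic f (0, w)) {κ : Type*} [Fintype κ] (v : κ → E)
    (hharm : ∀ p, fderiv ℝ (fun q => fderiv ℝ f q (1, 0)) p (1, 0)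
      + ∑ j, fderiv ℝ (fun q => fderiv ℝ f q (0, v j)) p (0, v j) = 0)
    (hL2 : Integrable (fun p => f p ^ 2)
      ((volume : Measure ℝ).prod (μ.restrict (ZSpan.fundamentalDomain b)))) :
    f = 0 := by
  funext ⟨t, x⟩
  have hslice := ZSpan.eq_zero_of_setIntegral_fundamentalDomain_eq_zero b
    (g := fun y => f (t, y) ^ 2) (by fun_prop) (fun y => sq_nonneg _)
    (fun w hw => ((hper w hw).slice_snd t).comp (· ^ 2))
    (setIntegral_fundamentalDomain_sq_eq_zero_of_harmonic b μ hf hper v hharm hL2 t)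
  exact pow_eq_zero_iff two_ne_zero |>.1 (congrFun hslice x)

end HarmonicOnSlab

/-- A function on `ℝ × T³` is modelled as a function on `ℝ × ℝ³` invariant under translation
by the lattice `Λ₃ = ℤ-span of b`; harmonicity means that the flat Laplacian (the sum of the
second derivatives in an orthonormal set of directions) vanishes, and the `L²`-condition is
square-integrability on `ℝ × (fundamental domain of Λ₃)`. -/
theorem harmonic_L2_on_R_times_T3_vanishes
    (b : Module.Basis (Fin 3) ℝ (EuclideanSpace ℝ (Fin 3)))
    (f : ℝ × EuclideanSpace ℝ (Fin 3) → ℝ)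
    (hreg : ContDiff ℝ 2 f)
    (hper : ∀ (p : ℝ × EuclideanSpace ℝ (Fin 3)) (n : Fin 3 → ℤ),
      f (p.1, p.2 + ∑ i, n i • b i) = f p)
    (hharm : ∀ p, ∑ μ : Fin 4,
      fderiv ℝ (fun q => fderiv ℝ f q (dir4 μ)) p (dir4 μ) = 0)
    (hL2 : Integrable (fun p => f p ^ 2)
      ((volume : Measure (ℝ × EuclideanSpace ℝ (Fin 3))).restrict
        (Set.univ ×ˢ ZSpan.fundamentalDomain b))) :
    ∀ p, f p = 0 := by
  have hper' : ∀ w ∈ span ℤ (range b), Periodic f (0, w) := by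
    intro w hw ⟨t, x⟩
    obtain ⟨n, rfl⟩ := (mem_span_range_iff_exists_fun ℤ).1 hw
    simpa using hper (t, x) n
  have hharm' (p) : fderiv ℝ (fun q => fderiv ℝ f q (1, 0)) p (1, 0)
      + ∑ i : Fin 3, fderiv ℝ (fun q => fderiv ℝ f q (0, EuclideanSpace.single i 1)) p
        (0, EuclideanSpace.single i 1) = 0 := by
    simpa [Fin.sum_univ_succ, dir4, add_assoc] using hharm p
  rw [Measure.volume_eq_prod, ← Measure.prod_restrict, Measure.restrict_univ] at hL2
  exact congrFun (eq_zero_of_harmonic_of_periodic_of_sq_integrable b volume hreg hper' _ hharm' hL2)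
end

section
/- Let (L,h,A) be a Hermitian line bundle with unitary connection on ℝ × T³ whose curvature F(A) satisfies the anti-self-duality equation F(A) = -∗F(A) and is L². Then F(A) = 0, i.e. the connection is flat. -/
open MeasureTheory

/-- Partial derivative in the `μ`-th coordinate direction of `ℝ × ℝ³`. -/
noncomputable def pderiv4 (μ : Fin 4) (g : ℝ × EuclideanSpace ℝ (Fin 3) → ℝ)
    (p : ℝ × EuclideanSpace ℝ (Fin 3)) : ℝ :=
  fderiv ℝ g p (dir4 μ)

abbrev E3' := EuclideanSpace ℝ (Fin 3)
abbrev M3 := ℝ × EuclideanSpace ℝ (Fin 3)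

section Calc4

lemma contDiff_pderiv4 {g : M3 → ℝ} (hg : ContDiff ℝ (⊤ : ℕ∞) g) (μ : Fin 4) :
    ContDiff ℝ (⊤ : ℕ∞) (pderiv4 μ g) := by
  have h1 : ContDiff ℝ (⊤ : ℕ∞) (fderiv ℝ g) := hg.fderiv_right (by simp)
  exact (ContinuousLinearMap.apply ℝ ℝ (dir4 μ)).contDiff.comp h1

lemma pderiv4_comm {g : M3 → ℝ} (hg : ContDiff ℝ (⊤ : ℕ∞) g) (μ ν : Fin 4) (p : M3) :
    pderiv4 μ (pderiv4 ν g) p = pderiv4 ν (pderiv4 μ g) p := by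
  set f' := fderiv ℝ g with hf'def
  have hf : ∀ y, HasFDerivAt g (f' y) y := fun y => (hg.differentiable (by simp) y).hasFDerivAt
  have hcd : ContDiff ℝ (⊤ : ℕ∞) f' := hg.fderiv_right (by simp)
  have hf' : HasFDerivAt f' (fderiv ℝ f' p) p := (hcd.differentiable (by simp) p).hasFDerivAt
  have sym := second_derivative_symmetric hf hf' (dir4 μ) (dir4 ν)
  have key : ∀ κ ρ : Fin 4, pderiv4 κ (pderiv4 ρ g) p = fderiv ℝ f' p (dir4 κ) (dir4 ρ) := by
    intro κ ρ
    have : pderiv4 ρ g = (ContinuousLinearMap.apply ℝ ℝ (dir4 ρ)) ∘ f' := rfl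
    rw [pderiv4, this]
    have hc := ((ContinuousLinearMap.apply ℝ ℝ (dir4 ρ)).hasFDerivAt.comp p hf').fderiv
    rw [hc]; rfl
  rw [key μ ν, key ν μ, sym]

lemma pderiv4_negfun {g : M3 → ℝ} (hg : ContDiff ℝ (⊤ : ℕ∞) g) (μ : Fin 4) (p : M3) :
    pderiv4 μ (fun q => -(g q)) p = -(pderiv4 μ g p) := by
  rw [pderiv4, fderiv_fun_neg]; simp [pderiv4]

lemma pderiv4_const (c : ℝ) (μ : Fin 4) (p : M3) :
    pderiv4 μ (fun _ => c) p = 0 := by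
  rw [pderiv4, fderiv_fun_const]; simp

lemma pderiv4_addfun {g h : M3 → ℝ} (hg : ContDiff ℝ (⊤ : ℕ∞) g) (hh : ContDiff ℝ (⊤ : ℕ∞) h)
    (μ : Fin 4) (p : M3) :
    pderiv4 μ (fun q => g q + h q) p = pderiv4 μ g p + pderiv4 μ h p := by
  rw [pderiv4, fderiv_fun_add (hg.differentiable (by simp)).differentiableAt
    (hh.differentiable (by simp)).differentiableAt]; simp [pderiv4]

lemma pderiv4_mul {g h : M3 → ℝ} (hg : ContDiff ℝ (⊤ : ℕ∞) g) (hh : ContDiff ℝ (⊤ : ℕ∞) h)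
    (μ : Fin 4) (p : M3) :
    pderiv4 μ (fun q => g q * h q) p = pderiv4 μ g p * h p + g p * pderiv4 μ h p := by
  rw [pderiv4, fderiv_fun_mul (hg.differentiable (by simp)).differentiableAt
    (hh.differentiable (by simp)).differentiableAt]; simp [pderiv4]; ring

lemma pderiv4_add4 {g0 g1 g2 g3 : M3 → ℝ} (h0 : ContDiff ℝ (⊤ : ℕ∞) g0) (h1 : ContDiff ℝ (⊤ : ℕ∞) g1)
    (h2 : ContDiff ℝ (⊤ : ℕ∞) g2) (h3 : ContDiff ℝ (⊤ : ℕ∞) g3) (κ : Fin 4) (p : M3) :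
    pderiv4 κ (fun q => g0 q + g1 q + g2 q + g3 q) p
      = pderiv4 κ g0 p + pderiv4 κ g1 p + pderiv4 κ g2 p + pderiv4 κ g3 p := by
  rw [pderiv4_addfun ((h0.add h1).add h2) h3, pderiv4_addfun (h0.add h1) h2,
    pderiv4_addfun h0 h1]

end Calc4

section PartA
variable (F : Fin 4 → Fin 4 → (M3 → ℝ))
  (hreg : ∀ μ ν, ContDiff ℝ (⊤ : ℕ∞) (F μ ν))
  (hanti : ∀ μ ν p, F μ ν p = -(F ν μ p))
  (hBianchi : ∀ μ ν ρ p,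
      pderiv4 μ (F ν ρ) p + pderiv4 ν (F ρ μ) p + pderiv4 ρ (F μ ν) p = 0)
  (hASD₁ : ∀ p, F 0 1 p = -(F 2 3 p))
  (hASD₂ : ∀ p, F 0 2 p = F 1 3 p)
  (hASD₃ : ∀ p, F 0 3 p = -(F 1 2 p))

include hreg hanti hBianchi hASD₁ hASD₂ hASD₃ in
lemma divfree : ∀ ν p,
    pderiv4 0 (F 0 ν) p + pderiv4 1 (F 1 ν) p + pderiv4 2 (F 2 ν) p
      + pderiv4 3 (F 3 ν) p = 0 := by
  have hdiag : ∀ μ, F μ μ = fun _ => (0:ℝ) := by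
    intro μ; funext p; have := hanti μ μ p; linarith
  intro ν p
  fin_cases ν
  · show pderiv4 0 (F 0 0) p + pderiv4 1 (F 1 0) p + pderiv4 2 (F 2 0) p + pderiv4 3 (F 3 0) p = 0
    have e1 : F 1 0 = F 2 3 := funext fun q => by rw [hanti 1 0 q, hASD₁ q]; ring
    have e2 : F 2 0 = fun q => -(F 1 3 q) := funext fun q => by rw [hanti 2 0 q, hASD₂ q]
    have e3 : F 3 0 = F 1 2 := funext fun q => by rw [hanti 3 0 q, hASD₃ q]; ring
    have e4 : F 3 1 = fun q => -(F 1 3 q) := funext fun q => by rw [hanti 3 1 q]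
    have hB := hBianchi 1 2 3 p
    rw [e4] at hB
    rw [hdiag 0, e1, e2, e3, pderiv4_const, pderiv4_negfun (hreg 1 3)]
    rw [pderiv4_negfun (hreg 1 3)] at hB
    linarith
  · show pderiv4 0 (F 0 1) p + pderiv4 1 (F 1 1) p + pderiv4 2 (F 2 1) p + pderiv4 3 (F 3 1) p = 0
    have e1 : F 0 1 = fun q => -(F 2 3 q) := funext hASD₁
    have e2 : F 2 1 = fun q => -(F 1 2 q) := funext fun q => by rw [hanti 2 1 q]
    have e3 : F 3 1 = fun q => -(F 1 3 q) := funext fun q => by rw [hanti 3 1 q]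
    have hB := hBianchi 0 2 3 p
    have e4 : F 3 0 = F 1 2 := funext fun q => by rw [hanti 3 0 q, hASD₃ q]; ring
    have e5 : F 0 2 = F 1 3 := funext hASD₂
    rw [e4, e5] at hB
    rw [hdiag 1, e1, e2, e3, pderiv4_const, pderiv4_negfun (hreg 2 3),
      pderiv4_negfun (hreg 1 2), pderiv4_negfun (hreg 1 3)]
    linarith
  · show pderiv4 0 (F 0 2) p + pderiv4 1 (F 1 2) p + pderiv4 2 (F 2 2) p + pderiv4 3 (F 3 2) p = 0
    have e1 : F 0 2 = F 1 3 := funext hASD₂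
    have e3 : F 3 2 = fun q => -(F 2 3 q) := funext fun q => by rw [hanti 3 2 q]
    have hB := hBianchi 0 3 1 p
    have e4 : F 3 1 = fun q => -(F 1 3 q) := funext fun q => by rw [hanti 3 1 q]
    have e5 : F 1 0 = F 2 3 := funext fun q => by rw [hanti 1 0 q, hASD₁ q]; ring
    have e6 : F 0 3 = fun q => -(F 1 2 q) := funext hASD₃
    rw [e4, e5, e6] at hB
    rw [hdiag 2, e1, e3, pderiv4_const, pderiv4_negfun (hreg 2 3)]
    rw [pderiv4_negfun (hreg 1 3), pderiv4_negfun (hreg 1 2)] at hB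
    linarith
  · show pderiv4 0 (F 0 3) p + pderiv4 1 (F 1 3) p + pderiv4 2 (F 2 3) p + pderiv4 3 (F 3 3) p = 0
    have e1 : F 0 3 = fun q => -(F 1 2 q) := funext hASD₃
    have hB := hBianchi 0 1 2 p
    have e4 : F 2 0 = fun q => -(F 1 3 q) := funext fun q => by rw [hanti 2 0 q, hASD₂ q]
    have e5 : F 0 1 = fun q => -(F 2 3 q) := funext hASD₁
    rw [e4, e5] at hB
    rw [hdiag 3, e1, pderiv4_const, pderiv4_negfun (hreg 1 2)]
    rw [pderiv4_negfun (hreg 1 3), pderiv4_negfun (hreg 2 3)] at hB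
    linarith

include hreg hanti hBianchi hASD₁ hASD₂ hASD₃ in
lemma harmonic4 : ∀ ν ρ p,
    pderiv4 0 (pderiv4 0 (F ν ρ)) p + pderiv4 1 (pderiv4 1 (F ν ρ)) p
      + pderiv4 2 (pderiv4 2 (F ν ρ)) p + pderiv4 3 (pderiv4 3 (F ν ρ)) p = 0 := by
  intro ν ρ p
  have hS : ∀ τ (κ : Fin 4),
      pderiv4 κ (pderiv4 0 (F 0 τ)) p + pderiv4 κ (pderiv4 1 (F 1 τ)) p
        + pderiv4 κ (pderiv4 2 (F 2 τ)) p + pderiv4 κ (pderiv4 3 (F 3 τ)) p = 0 := by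
    intro τ κ
    have hfn : (fun q => pderiv4 0 (F 0 τ) q + pderiv4 1 (F 1 τ) q
        + pderiv4 2 (F 2 τ) q + pderiv4 3 (F 3 τ) q) = fun _ => (0:ℝ) :=
      funext fun q => divfree F hreg hanti hBianchi hASD₁ hASD₂ hASD₃ τ q
    have := pderiv4_add4 (contDiff_pderiv4 (hreg 0 τ) 0) (contDiff_pderiv4 (hreg 1 τ) 1)
      (contDiff_pderiv4 (hreg 2 τ) 2) (contDiff_pderiv4 (hreg 3 τ) 3) κ p
    rw [hfn, pderiv4_const] at this
    linarith
  have step2 : ∀ μ : Fin 4, pderiv4 μ (pderiv4 μ (F ν ρ)) p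
      = pderiv4 ν (pderiv4 μ (F μ ρ)) p - pderiv4 ρ (pderiv4 μ (F μ ν)) p := by
    intro μ
    have step1 : pderiv4 μ (F ν ρ)
        = fun q => -(pderiv4 ν (F ρ μ) q) + -(pderiv4 ρ (F μ ν) q) :=
      funext fun q => by have := hBianchi μ ν ρ q; linarith
    rw [step1, pderiv4_addfun (contDiff_pderiv4 (hreg ρ μ) ν).neg
      (contDiff_pderiv4 (hreg μ ν) ρ).neg,
      pderiv4_negfun (contDiff_pderiv4 (hreg ρ μ) ν),
      pderiv4_negfun (contDiff_pderiv4 (hreg μ ν) ρ),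
      pderiv4_comm (hreg ρ μ) μ ν p, pderiv4_comm (hreg μ ν) μ ρ p]
    have eρμ : pderiv4 μ (F ρ μ) = fun q => -(pderiv4 μ (F μ ρ) q) := by
      funext q
      rw [show F ρ μ = fun q => -(F μ ρ q) from funext (hanti ρ μ),
        pderiv4_negfun (hreg μ ρ)]
    rw [eρμ, pderiv4_negfun (contDiff_pderiv4 (hreg μ ρ) μ)]
    ring
  have h0 := step2 0; have h1 := step2 1; have h2 := step2 2; have h3 := step2 3
  have hA := hS ρ ν; have hB := hS ν ρ
  linarith

end PartA

section PartB
variable (b : Module.Basis (Fin 3) ℝ E3')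

lemma span_explicit {v : E3'} (hv : v ∈ Submodule.span ℤ (Set.range b)) :
    ∃ n : Fin 3 → ℤ, v = ∑ i, n i • b i := by
  have h : ∀ i, ∃ z : ℤ, (z : ℝ) = b.repr v i :=
    fun i => (b.mem_span_iff_repr_mem ℤ v).mp hv i
  choose n hn using h
  refine ⟨n, ?_⟩
  calc v = ∑ i, b.repr v i • b i := (b.sum_repr v).symm
    _ = ∑ i, n i • b i := by
        refine Finset.sum_congr rfl fun i _ => ?_
        rw [← hn i, Int.cast_smul_eq_zsmul]

lemma integral_translate (g : E3' → ℝ)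
    (hper : ∀ x v, v ∈ Submodule.span ℤ (Set.range b) → g (x + v) = g x) (y : E3') :
    ∫ x in ZSpan.fundamentalDomain b, g (x + y) = ∫ x in ZSpan.fundamentalDomain b, g x := by
  have hfund : IsAddFundamentalDomain (Submodule.span ℤ (Set.range b))
      (ZSpan.fundamentalDomain b) volume := ZSpan.isAddFundamentalDomain b volume
  haveI : MeasurableVAdd (Submodule.span ℤ (Set.range b)) E3' :=
    have hcv : ∀ γ : Submodule.span ℤ (Set.range b), Measurable (fun x : E3' => γ +ᵥ x) :=
      fun γ => by
        have : (fun x : E3' => γ +ᵥ x) = fun x : E3' => (γ : E3') + x := rfl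
        rw [this]; exact measurable_const_add _
    MeasurableVAdd.mk (toMeasurableConstVAdd := ⟨hcv⟩) (fun x => measurable_of_countable _)
  haveI : VAddInvariantMeasure (Submodule.span ℤ (Set.range b)) E3' volume :=
    ⟨fun γ s hs => by
      have : (fun x : E3' => γ +ᵥ x) = fun x : E3' => (γ : E3') + x := rfl
      rw [this, measure_preimage_add]⟩
  have hqmp : Measure.QuasiMeasurePreserving (Equiv.addLeft y).symm
      (volume : Measure E3') volume := by
    rw [Equiv.addLeft_symm]
    exact (measurePreserving_add_left volume (-y)).quasiMeasurePreserving
  have ht : IsAddFundamentalDomain (Submodule.span ℤ (Set.range b))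
      ((Equiv.addLeft y) '' (ZSpan.fundamentalDomain b)) volume := by
    refine hfund.image_of_equiv (Equiv.addLeft y) hqmp (Equiv.refl _) ?_
    intro γ x
    show y + ((γ : E3') + x) = (γ : E3') + (y + x)
    rw [add_left_comm]
  have hinv : ∀ (γ : Submodule.span ℤ (Set.range b)) (x : E3'), g (γ +ᵥ x) = g x := by
    intro γ x
    have := hper x γ γ.2
    show g ((γ : E3') + x) = g x
    rwa [add_comm]
  have h1 : ∫ x in ((Equiv.addLeft y) '' (ZSpan.fundamentalDomain b)), g x
      = ∫ x in ZSpan.fundamentalDomain b, g x := ht.setIntegral_eq hfund hinv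
  have h2 : ∫ x in ((Equiv.addLeft y) '' (ZSpan.fundamentalDomain b)), g x
      = ∫ x in ZSpan.fundamentalDomain b, g (y + x) := by
    have hmp := measurePreserving_add_left (volume : Measure E3') y
    have := hmp.setIntegral_image_emb (MeasurableEquiv.addLeft y).measurableEmbedding g
      (ZSpan.fundamentalDomain b)
    rw [← this]; rfl
  rw [← h1, h2]
  congr 1; funext x; rw [add_comm]

open Metric in
lemma avg_deriv_zero (g : E3' → ℝ) (hg : ContDiff ℝ (⊤ : ℕ∞) g)
    (hper : ∀ x v, v ∈ Submodule.span ℤ (Set.range b) → g (x + v) = g x) (v : E3') :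
    ∫ x in ZSpan.fundamentalDomain b, fderiv ℝ g x v = 0 := by
  set D := ZSpan.fundamentalDomain b with hD
  have hDmeas : MeasurableSet D := ZSpan.fundamentalDomain_measurableSet b
  have hDbdd := ZSpan.fundamentalDomain_isBounded b
  have hDfin : volume D ≠ ⊤ := hDbdd.measure_lt_top.ne
  haveI : IsFiniteMeasure ((volume : Measure E3').restrict D) :=
    ⟨by rw [Measure.restrict_apply_univ]; exact hDfin.lt_top⟩
  have hC : IsCompact (closure D) :=
    Metric.isCompact_of_isClosed_isBounded isClosed_closure hDbdd.closure
  set K := (fun q : E3' × ℝ => q.1 + q.2 • v) '' (closure D ×ˢ Set.Icc (-1 : ℝ) 1) with hK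
  have hKc : IsCompact K := (hC.prod isCompact_Icc).image
    (continuous_fst.add (continuous_snd.smul continuous_const))
  have hmemK : ∀ x ∈ D, ∀ s : ℝ, |s| ≤ 1 → x + s • v ∈ K := by
    intro x hx s hs
    exact ⟨(x, s), ⟨subset_closure hx, abs_le.mp hs⟩, rfl⟩
  have hdc : Continuous (fun x => fderiv ℝ g x v) :=
    (ContinuousLinearMap.apply ℝ ℝ v).continuous.comp (hg.continuous_fderiv (by simp))
  obtain ⟨C0, hC0⟩ := hKc.exists_bound_of_continuousOn hdc.continuousOn
  obtain ⟨C1, hC1⟩ := hKc.exists_bound_of_continuousOn hg.continuous.continuousOn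
  have hdiffg := hg.differentiable (by simp)
  have key := hasDerivAt_integral_of_dominated_loc_of_deriv_le
    (μ := (volume : Measure E3').restrict D) (x₀ := (0:ℝ)) (s := Metric.ball (0:ℝ) 1)
    (F := fun s x => g (x + s • v)) (F' := fun s x => fderiv ℝ g (x + s • v) v)
    (bound := fun _ => C0) (Metric.ball_mem_nhds _ one_pos)
    (Filter.Eventually.of_forall fun s =>
      ((hg.continuous.comp (continuous_add_right (s • v))).aestronglyMeasurable))
    (by
      apply Measure.integrableOn_of_bounded hDfin
        ((hg.continuous.comp (continuous_add_right ((0:ℝ) • v))).aestronglyMeasurable)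
      refine (ae_restrict_iff' hDmeas).mpr (Filter.Eventually.of_forall fun x hx => ?_)
      exact hC1 _ (hmemK x hx 0 (by norm_num)))
    (((ContinuousLinearMap.apply ℝ ℝ v).continuous.comp
      ((hg.continuous_fderiv (by simp)).comp (continuous_add_right ((0:ℝ) • v)))).aestronglyMeasurable)
    (by
      refine (ae_restrict_iff' hDmeas).mpr (Filter.Eventually.of_forall fun x hx => ?_)
      intro s hs
      exact hC0 _ (hmemK x hx s (le_of_lt (by simpa [Real.dist_eq] using hs))))
    (integrable_const C0)
    (by
      refine Filter.Eventually.of_forall fun x => ?_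
      intro s _
      have inner : HasDerivAt (fun s : ℝ => x + s • v) v s := by
        simpa using ((hasDerivAt_id s).smul_const v).const_add x
      exact (hdiffg _).hasFDerivAt.comp_hasDerivAt s inner)
  have key2 := key.2
  have hconstf : (fun s : ℝ => ∫ x in D, g (x + s • v)) = fun _ => ∫ x in D, g x :=
    funext fun s => integral_translate b g hper (s • v)
  rw [hconstf] at key2
  have h0 := (hasDerivAt_const (0:ℝ) (∫ x in D, g x)).unique key2
  have hfin : (∫ a in D, (fun s x => (fderiv ℝ g (x + s • v)) v) (0:ℝ) a)
      = ∫ x in D, fderiv ℝ g x v := by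
    congr 1; funext x; simp
  rw [← hfin]; exact h0.symm

lemma fderiv_slice (G : M3 → ℝ) (hG : Differentiable ℝ G) (t : ℝ) (x u : E3') :
    fderiv ℝ (fun y : E3' => G (t, y)) x u = fderiv ℝ G (t, x) (0, u) := by
  have h := (hG (t, x)).hasFDerivAt.comp x (hasFDerivAt_prodMk_right t x)
  rw [show (fun y : E3' => G (t, y)) = G ∘ Prod.mk t from rfl, h.fderiv]; rfl

lemma pderiv4_periodic (G : M3 → ℝ) (hG : ContDiff ℝ (⊤ : ℕ∞) G)
    (hper : ∀ (p : M3) v, v ∈ Submodule.span ℤ (Set.range b) → G (p.1, p.2 + v) = G p)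
    (μ : Fin 4) :
    ∀ (p : M3) v, v ∈ Submodule.span ℤ (Set.range b) →
      pderiv4 μ G (p.1, p.2 + v) = pderiv4 μ G p := by
  intro p v hv
  set c : M3 := ((0:ℝ), v) with hc
  have hGc : (fun q => G (q + c)) = G := by
    funext q
    have h1 : q + c = (q.1, q.2 + v) := by
      apply Prod.ext <;> simp [hc]
    rw [h1, hper q v hv]
  have hdiff := hG.differentiable (by simp)
  have h1 : HasFDerivAt (fun q => G (q + c)) (fderiv ℝ G (p + c)) p :=
    (hdiff (p + c)).hasFDerivAt.comp p ((hasFDerivAt_id p).add_const c)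
  rw [hGc] at h1
  have h2 : fderiv ℝ G p = fderiv ℝ G (p + c) := h1.fderiv
  have h3 : (p.1, p.2 + v) = p + c := by apply Prod.ext <;> simp [hc]
  rw [pderiv4, pderiv4, h3, ← h2]

open Metric in
lemma hasDerivAt_setInt (G : M3 → ℝ) (hG : ContDiff ℝ (⊤ : ℕ∞) G) (t₀ : ℝ) :
    HasDerivAt (fun t => ∫ x in ZSpan.fundamentalDomain b, G (t, x))
      (∫ x in ZSpan.fundamentalDomain b, pderiv4 0 G (t₀, x)) t₀ := by
  set D := ZSpan.fundamentalDomain b with hD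
  have hDmeas : MeasurableSet D := ZSpan.fundamentalDomain_measurableSet b
  have hDbdd := ZSpan.fundamentalDomain_isBounded b
  have hDfin : volume D ≠ ⊤ := hDbdd.measure_lt_top.ne
  haveI : IsFiniteMeasure ((volume : Measure E3').restrict D) :=
    ⟨by rw [Measure.restrict_apply_univ]; exact hDfin.lt_top⟩
  have hCc : IsCompact (closure D) :=
    Metric.isCompact_of_isClosed_isBounded isClosed_closure hDbdd.closure
  set K := (Set.Icc (t₀ - 1) (t₀ + 1)) ×ˢ closure D with hK
  have hKc : IsCompact K := isCompact_Icc.prod hCc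
  have hmemK : ∀ x ∈ D, ∀ t : ℝ, |t - t₀| ≤ 1 → ((t, x) : M3) ∈ K := by
    intro x hx t ht
    have := abs_le.mp ht
    exact ⟨⟨by linarith [this.1], by linarith [this.2]⟩, subset_closure hx⟩
  have hpd : Continuous (pderiv4 0 G) := (contDiff_pderiv4 hG 0).continuous
  obtain ⟨C0, hC0⟩ := hKc.exists_bound_of_continuousOn hpd.continuousOn
  obtain ⟨C1, hC1⟩ := hKc.exists_bound_of_continuousOn hG.continuous.continuousOn
  have hdiffG := hG.differentiable (by simp)
  have key := hasDerivAt_integral_of_dominated_loc_of_deriv_le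
    (μ := (volume : Measure E3').restrict D) (x₀ := t₀) (s := Metric.ball t₀ 1)
    (F := fun t x => G (t, x)) (F' := fun t x => pderiv4 0 G (t, x))
    (bound := fun _ => C0) (Metric.ball_mem_nhds _ one_pos)
    (Filter.Eventually.of_forall fun t =>
      (hG.continuous.comp (continuous_const.prodMk continuous_id)).aestronglyMeasurable)
    (by
      apply Measure.integrableOn_of_bounded hDfin
        (hG.continuous.comp (continuous_const.prodMk continuous_id)).aestronglyMeasurable
      refine (ae_restrict_iff' hDmeas).mpr (Filter.Eventually.of_forall fun x hx => ?_)
      exact hC1 _ (hmemK x hx t₀ (by norm_num)))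
    ((hpd.comp (continuous_const.prodMk continuous_id)).aestronglyMeasurable)
    (by
      refine (ae_restrict_iff' hDmeas).mpr (Filter.Eventually.of_forall fun x hx => ?_)
      intro t ht
      exact hC0 _ (hmemK x hx t (le_of_lt (by simpa [Real.dist_eq] using ht))))
    (integrable_const C0)
    (by
      refine Filter.Eventually.of_forall fun x => ?_
      intro t _
      have inner : HasDerivAt (fun t : ℝ => ((t, x) : M3)) ((1:ℝ), (0:E3')) t :=
        (hasDerivAt_id t).prodMk (hasDerivAt_const t x)
      have := (hdiffG ((t, x) : M3)).hasFDerivAt.comp_hasDerivAt t inner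
      have hdir : ((1:ℝ), (0:E3')) = dir4 0 := by simp [dir4]
      rw [hdir] at this
      exact this)
  exact key.2

lemma convex_three' {h : ℝ → ℝ} (hc : ConvexOn ℝ Set.univ h) {x y z : ℝ}
    (hxy : x < y) (hyz : y < z) :
    (z - x) * h y ≤ (z - y) * h x + (y - x) * h z := by
  have hzx : (0:ℝ) < z - x := by linarith
  have ha : 0 ≤ (z - y) / (z - x) := div_nonneg (by linarith) (by linarith)
  have hb : 0 ≤ (y - x) / (z - x) := div_nonneg (by linarith) (by linarith)
  have hab : (z - y) / (z - x) + (y - x) / (z - x) = 1 := by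
    rw [← add_div, div_eq_one_iff_eq hzx.ne']; ring
  have h2 := hc.2 (Set.mem_univ x) (Set.mem_univ z) ha hb hab
  have harg : ((z - y) / (z - x)) • x + ((y - x) / (z - x)) • z = y := by
    rw [smul_eq_mul, smul_eq_mul, div_mul_eq_mul_div, div_mul_eq_mul_div, ← add_div,
      div_eq_iff hzx.ne']; ring
  rw [harg] at h2
  have h3 := mul_le_mul_of_nonneg_left h2 hzx.le
  calc (z - x) * h y ≤ (z - x) * (((z - y) / (z - x)) • h x + ((y - x) / (z - x)) • h z) := h3
    _ = (z - y) * h x + (y - x) * h z := by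
        simp only [smul_eq_mul]
        field_simp

lemma convex_nonneg_int {h : ℝ → ℝ} (hc : ConvexOn ℝ Set.univ h) (h0 : ∀ t, 0 ≤ h t)
    (hi : Integrable h volume) : ∀ t, h t = 0 := by
  by_contra hcon
  push_neg at hcon
  obtain ⟨t₀, ht₀⟩ := hcon
  have hpos : 0 < h t₀ := lt_of_le_of_ne (h0 t₀) (Ne.symm ht₀)
  have hbig : ∀ (S : Set ℝ), MeasurableSet S → volume S = ⊤ →
      (∀ t ∈ S, h t₀ ≤ h t) → False := by
    intro S hSm hSv hSh
    have hconst : IntegrableOn (fun _ => h t₀) S volume := by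
      apply Integrable.mono' (hi.integrableOn)
      · exact aestronglyMeasurable_const
      · refine (ae_restrict_iff' hSm).mpr (Filter.Eventually.of_forall fun t ht => ?_)
        rw [Real.norm_eq_abs, abs_of_nonneg hpos.le]
        exact hSh t ht
    rw [IntegrableOn, integrable_const_iff] at hconst
    rcases hconst with h1 | h2
    · exact hpos.ne' h1
    · rw [isFiniteMeasure_restrict] at h2
      exact h2 hSv
  by_cases hA : ∃ t₁, t₁ ≠ t₀ ∧ h t₀ ≤ h t₁
  · obtain ⟨t₁, hne, hge⟩ := hA
    rcases lt_or_gt_of_ne hne with hlt | hgt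
    · -- t₁ < t₀ : h ≥ h t₀ on Iic (t₁ - 1)
      refine hbig (Set.Iic (t₁ - 1)) measurableSet_Iic (by simp) ?_
      intro t ht
      simp only [Set.mem_Iic] at ht
      have h3 := convex_three' hc (show t < t₁ by linarith) hlt
      nlinarith [h3, hge]
    · -- t₁ > t₀ : h ≥ h t₀ on Ici (t₁ + 1)
      refine hbig (Set.Ici (t₁ + 1)) measurableSet_Ici (by simp) ?_
      intro t ht
      simp only [Set.mem_Ici] at ht
      have h3 := convex_three' hc hgt (show t₁ < t by linarith)
      nlinarith [h3, hge]
  · push_neg at hA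
    have m1 := hA (t₀ - 1) (by norm_num)
    have m2 := hA (t₀ + 1) (by norm_num)
    have h3 := convex_three' hc (show t₀ - 1 < t₀ by norm_num) (show t₀ < t₀ + 1 by norm_num)
    norm_num at h3
    linarith

end PartB

section Main
variable (b : Module.Basis (Fin 3) ℝ E3')

open Metric in
lemma partB (f : M3 → ℝ) (hf : ContDiff ℝ (⊤ : ℕ∞) f)
    (hperiod : ∀ (p : M3) v, v ∈ Submodule.span ℤ (Set.range b) → f (p.1, p.2 + v) = f p)
    (hharm : ∀ p, pderiv4 0 (pderiv4 0 f) p + pderiv4 1 (pderiv4 1 f) p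
      + pderiv4 2 (pderiv4 2 f) p + pderiv4 3 (pderiv4 3 f) p = 0)
    (hL2 : Integrable (fun p => f p ^ 2)
      ((volume : Measure M3).restrict (Set.univ ×ˢ ZSpan.fundamentalDomain b))) :
    ∀ p, f p = 0 := by
  classical
  set D := ZSpan.fundamentalDomain b with hDdef
  have hDmeas : MeasurableSet D := ZSpan.fundamentalDomain_measurableSet b
  have hDbdd := ZSpan.fundamentalDomain_isBounded b
  have hDfin : volume D ≠ ⊤ := hDbdd.measure_lt_top.ne
  have hCc : IsCompact (closure D) :=
    Metric.isCompact_of_isClosed_isBounded isClosed_closure hDbdd.closure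
  have intD : ∀ (w : E3' → ℝ), Continuous w → IntegrableOn w D volume := by
    intro w hw
    obtain ⟨C, hC⟩ := hCc.exists_bound_of_continuousOn hw.continuousOn
    exact Measure.integrableOn_of_bounded hDfin hw.aestronglyMeasurable
      ((ae_restrict_iff' hDmeas).mpr
        (Filter.Eventually.of_forall fun x hx => hC x (subset_closure hx)))
  set g : M3 → ℝ := fun p => f p * f p with hgdef
  have hg : ContDiff ℝ (⊤ : ℕ∞) g := hf.mul hf
  have hgper : ∀ (p : M3) v, v ∈ Submodule.span ℤ (Set.range b) → g (p.1, p.2 + v) = g p := by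
    intro p v hv; simp only [hgdef]; rw [hperiod p v hv]
  have hsq : ∀ (μ : Fin 4) p, pderiv4 μ (pderiv4 μ g) p
      = 2 * (pderiv4 μ f p) * (pderiv4 μ f p) + 2 * f p * pderiv4 μ (pderiv4 μ f) p := by
    intro μ p
    have e : pderiv4 μ g = fun q => pderiv4 μ f q * f q + f q * pderiv4 μ f q :=
      funext fun q => pderiv4_mul hf hf μ q
    rw [e, pderiv4_addfun ((contDiff_pderiv4 hf μ).mul hf) (hf.mul (contDiff_pderiv4 hf μ)),
      pderiv4_mul (contDiff_pderiv4 hf μ) hf, pderiv4_mul hf (contDiff_pderiv4 hf μ)]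
    ring
  set h : ℝ → ℝ := fun t => ∫ x in D, g (t, x) with hhdef
  set h1 : ℝ → ℝ := fun t => ∫ x in D, pderiv4 0 g (t, x) with h1def
  set h2 : ℝ → ℝ := fun t => ∫ x in D, pderiv4 0 (pderiv4 0 g) (t, x) with h2def
  have hd1 : ∀ t, HasDerivAt h (h1 t) t := fun t => hasDerivAt_setInt b g hg t
  have hd2 : ∀ t, HasDerivAt h1 (h2 t) t := fun t =>
    hasDerivAt_setInt b (pderiv4 0 g) (contDiff_pderiv4 hg 0) t
  have hdh : deriv h = h1 := funext fun t => (hd1 t).deriv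
  have hdh1 : deriv h1 = h2 := funext fun t => (hd2 t).deriv
  have hvan : ∀ (i : Fin 4) (e : E3'), (0, e) = dir4 i →
      ∀ t, ∫ x in D, pderiv4 i (pderiv4 i g) (t, x) = 0 := by
    intro i e he t
    set w : E3' → ℝ := fun y => pderiv4 i g (t, y) with hwdef
    have hw : ContDiff ℝ (⊤ : ℕ∞) w :=
      (contDiff_pderiv4 hg i).comp (contDiff_const.prodMk contDiff_id)
    have hwper : ∀ x v, v ∈ Submodule.span ℤ (Set.range b) → w (x + v) = w x := by
      intro x v hv
      exact pderiv4_periodic b g hg hgper i (t, x) v hv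
    have hkey := avg_deriv_zero b w hw hwper e
    have heq : ∀ x, fderiv ℝ w x e = pderiv4 i (pderiv4 i g) (t, x) := by
      intro x
      rw [hwdef, fderiv_slice (pderiv4 i g) ((contDiff_pderiv4 hg i).differentiable (by simp)) t x e,
        pderiv4, he]
    rw [show (∫ x in D, pderiv4 i (pderiv4 i g) (t, x)) = ∫ x in D, fderiv ℝ w x e from by
      congr 1; funext x; exact (heq x).symm]
    exact hkey
  set Q : M3 → ℝ := fun p => 2 * (pderiv4 0 f p) * (pderiv4 0 f p)
      + 2 * (pderiv4 1 f p) * (pderiv4 1 f p) + 2 * (pderiv4 2 f p) * (pderiv4 2 f p)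
      + 2 * (pderiv4 3 f p) * (pderiv4 3 f p) with hQdef
  have hQcont : Continuous Q := by
    have c0 := (contDiff_pderiv4 hf 0).continuous
    have c1 := (contDiff_pderiv4 hf 1).continuous
    have c2 := (contDiff_pderiv4 hf 2).continuous
    have c3 := (contDiff_pderiv4 hf 3).continuous
    exact ((((continuous_const.mul c0).mul c0).add ((continuous_const.mul c1).mul c1)).add
      ((continuous_const.mul c2).mul c2)).add ((continuous_const.mul c3).mul c3)
  have hQid : ∀ p, pderiv4 0 (pderiv4 0 g) p = Q p - pderiv4 1 (pderiv4 1 g) p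
      - pderiv4 2 (pderiv4 2 g) p - pderiv4 3 (pderiv4 3 g) p := by
    intro p
    have h₀ := hsq 0 p; have h₁ := hsq 1 p; have h₂ := hsq 2 p; have h₃ := hsq 3 p
    have hA : pderiv4 0 (pderiv4 0 f) p = -(pderiv4 1 (pderiv4 1 f) p
        + pderiv4 2 (pderiv4 2 f) p + pderiv4 3 (pderiv4 3 f) p) := by linarith [hharm p]
    rw [h₀, h₁, h₂, h₃, hA, hQdef]
    ring
  have h2eq : ∀ t, h2 t = ∫ x in D, Q (t, x) := by
    intro t
    have hfn : (fun x => pderiv4 0 (pderiv4 0 g) (t, x))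
        = fun x => Q (t, x) - pderiv4 1 (pderiv4 1 g) (t, x)
          - pderiv4 2 (pderiv4 2 g) (t, x) - pderiv4 3 (pderiv4 3 g) (t, x) :=
      funext fun x => hQid (t, x)
    have i1 : IntegrableOn (fun x => Q (t, x)) D volume :=
      intD _ (hQcont.comp (continuous_const.prodMk continuous_id))
    have i2 : IntegrableOn (fun x => pderiv4 1 (pderiv4 1 g) (t, x)) D volume :=
      intD _ ((contDiff_pderiv4 (contDiff_pderiv4 hg 1) 1).continuous.comp
        (continuous_const.prodMk continuous_id))
    have i3 : IntegrableOn (fun x => pderiv4 2 (pderiv4 2 g) (t, x)) D volume :=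
      intD _ ((contDiff_pderiv4 (contDiff_pderiv4 hg 2) 2).continuous.comp
        (continuous_const.prodMk continuous_id))
    have i4 : IntegrableOn (fun x => pderiv4 3 (pderiv4 3 g) (t, x)) D volume :=
      intD _ ((contDiff_pderiv4 (contDiff_pderiv4 hg 3) 3).continuous.comp
        (continuous_const.prodMk continuous_id))
    have e1 : h2 t = ∫ x in D, (Q (t, x) - pderiv4 1 (pderiv4 1 g) (t, x)
        - pderiv4 2 (pderiv4 2 g) (t, x) - pderiv4 3 (pderiv4 3 g) (t, x)) := by
      simp only [h2def]; rw [hfn]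
    have s3 : (∫ x in D, (Q (t, x) - pderiv4 1 (pderiv4 1 g) (t, x)
        - pderiv4 2 (pderiv4 2 g) (t, x) - pderiv4 3 (pderiv4 3 g) (t, x)))
        = (∫ x in D, (Q (t, x) - pderiv4 1 (pderiv4 1 g) (t, x)
            - pderiv4 2 (pderiv4 2 g) (t, x)))
          - ∫ x in D, pderiv4 3 (pderiv4 3 g) (t, x) :=
      integral_sub ((i1.sub i2).sub i3) i4
    have s2 : (∫ x in D, (Q (t, x) - pderiv4 1 (pderiv4 1 g) (t, x)
        - pderiv4 2 (pderiv4 2 g) (t, x)))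
        = (∫ x in D, (Q (t, x) - pderiv4 1 (pderiv4 1 g) (t, x)))
          - ∫ x in D, pderiv4 2 (pderiv4 2 g) (t, x) :=
      integral_sub (i1.sub i2) i3
    have s1 : (∫ x in D, (Q (t, x) - pderiv4 1 (pderiv4 1 g) (t, x)))
        = (∫ x in D, Q (t, x)) - ∫ x in D, pderiv4 1 (pderiv4 1 g) (t, x) :=
      integral_sub i1 i2
    rw [e1, s3, s2, s1, hvan 1 (EuclideanSpace.single 0 1) rfl t,
      hvan 2 (EuclideanSpace.single 1 1) rfl t, hvan 3 (EuclideanSpace.single 2 1) rfl t]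
    ring
  have h2nonneg : ∀ t, 0 ≤ h2 t := by
    intro t
    rw [h2eq t]
    refine setIntegral_nonneg hDmeas fun x _ => ?_
    simp only [hQdef]
    nlinarith [mul_self_nonneg (pderiv4 0 f (t, x)), mul_self_nonneg (pderiv4 1 f (t, x)),
      mul_self_nonneg (pderiv4 2 f (t, x)), mul_self_nonneg (pderiv4 3 f (t, x))]
  have hdiff_h : Differentiable ℝ h := fun t => (hd1 t).differentiableAt
  have hconv : ConvexOn ℝ Set.univ h := by
    apply convexOn_of_deriv2_nonneg' convex_univ hdiff_h.differentiableOn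
    · rw [hdh]
      have hdiff_h1 : Differentiable ℝ h1 := fun t => (hd2 t).differentiableAt
      exact hdiff_h1.differentiableOn
    · intro x _
      have he2 : deriv^[2] h x = deriv (deriv h) x := by
        simp only [Function.iterate_succ, Function.iterate_zero, Function.comp, id]
      rw [he2, hdh, hdh1]
      exact h2nonneg x
  have hnn : ∀ t, 0 ≤ h t := fun t => setIntegral_nonneg hDmeas fun x _ => mul_self_nonneg _
  have hint : Integrable h volume := by
    have h0 : Integrable g ((volume : Measure M3).restrict (Set.univ ×ˢ D)) := by
      have hfg : (fun p : M3 => f p ^ 2) = g := funext fun p => by rw [hgdef]; ring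
      rwa [hfg] at hL2
    rw [Measure.volume_eq_prod, ← Measure.prod_restrict] at h0
    have h1' := h0.integral_prod_left
    rw [Measure.restrict_univ] at h1'
    exact h1'
  have hzero : ∀ t, h t = 0 := convex_nonneg_int hconv hnn hint
  have hrepr_cont : ∀ i : Fin 3, Continuous fun x : E3' => b.repr x i := by
    intro i
    exact LinearMap.continuous_of_finiteDimensional
      ((Finsupp.lapply i).comp (b.repr : E3' →ₗ[ℝ] (Fin 3 →₀ ℝ)))
  set U : Set E3' := {x | ∀ i, b.repr x i ∈ Set.Ioo (0:ℝ) 1} with hUdef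
  have hUopen : IsOpen U := by
    have hU2 : U = ⋂ i, (fun x : E3' => b.repr x i) ⁻¹' (Set.Ioo (0:ℝ) 1) := by
      ext x; simp [hUdef, Set.mem_iInter]
    rw [hU2]
    exact isOpen_iInter_of_finite fun i => isOpen_Ioo.preimage (hrepr_cont i)
  have hUD : U ⊆ D := by
    intro x hx i
    exact Set.Ioo_subset_Ico_self (hx i)
  have hsliceD : ∀ t, ∀ y ∈ D, f (t, y) = 0 := by
    intro t y hy
    by_contra hne
    have hε : 0 < g (t, y) := by rw [hgdef]; exact mul_self_pos.mpr hne
    set ε := g (t, y) with hεdef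
    have hcont : Continuous fun x : E3' => g (t, x) :=
      hg.continuous.comp (continuous_const.prodMk continuous_id)
    have hnhds : {x : E3' | ε/2 < g (t, x)} ∈ nhds y :=
      (isOpen_lt continuous_const hcont).mem_nhds (by simp only [Set.mem_setOf_eq]; linarith)
    obtain ⟨δ, hδpos, hδ⟩ := Metric.mem_nhds_iff.mp hnhds
    set z : E3' := ∑ i, (2⁻¹ : ℝ) • b i with hzdef
    have hrz : ∀ i, b.repr z i = 2⁻¹ := by
      intro i
      rw [hzdef]
      simp [Finsupp.single_apply]
    set s : ℝ := min 1 (δ / (‖z - y‖ + 1)) with hsdef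
    have hs0 : 0 < s := lt_min one_pos (div_pos hδpos (by positivity))
    have hs1 : s ≤ 1 := min_le_left _ _
    set w' : E3' := y + s • (z - y) with hwdef'
    have hyIco : ∀ i, b.repr y i ∈ Set.Ico (0:ℝ) 1 := hy
    have hwU : w' ∈ U := by
      intro i
      have hrw : b.repr w' i = (1 - s) * b.repr y i + s * 2⁻¹ := by
        rw [hwdef']
        simp [map_add, _root_.map_smul, map_sub, hrz i]
        ring
      have hyi := hyIco i
      obtain ⟨hyi1, hyi2⟩ := hyi
      constructor
      · rw [hrw]; nlinarith
      · rw [hrw]; nlinarith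
    have hwnear : dist w' y < δ := by
      rw [hwdef', dist_eq_norm]
      have : y + s • (z - y) - y = s • (z - y) := by abel
      rw [this, norm_smul, Real.norm_eq_abs, abs_of_pos hs0]
      calc s * ‖z - y‖ ≤ (δ / (‖z - y‖ + 1)) * ‖z - y‖ :=
            mul_le_mul_of_nonneg_right (min_le_right _ _) (norm_nonneg _)
        _ < δ := by
            rw [div_mul_eq_mul_div, div_lt_iff₀ (by positivity)]
            nlinarith [norm_nonneg (z - y)]
    obtain ⟨r, hrpos, hrU⟩ := Metric.isOpen_iff.mp hUopen w' hwU
    set r' := min r (δ - dist w' y) with hr'def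
    have hr'pos : 0 < r' := lt_min hrpos (by linarith)
    have hball_sub : Metric.ball w' r' ⊆ D :=
      subset_trans (Metric.ball_subset_ball (min_le_left _ _)) (hrU.trans hUD)
    have hball_subδ : Metric.ball w' r' ⊆ Metric.ball y δ := by
      intro x hx
      rw [Metric.mem_ball] at *
      have h1'' := dist_triangle x w' y
      have h2'' : r' ≤ δ - dist w' y := min_le_right _ _
      linarith
    have hI : IntegrableOn (fun x => g (t, x)) D volume := intD _ hcont
    have hge : (ε/2) * (volume (Metric.ball w' r')).toReal
        ≤ ∫ x in Metric.ball w' r', g (t, x) := by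
      apply setIntegral_ge_of_const_le_real measurableSet_ball measure_ball_lt_top.ne
      · intro x hx
        exact le_of_lt (hδ (hball_subδ hx))
      · exact hI.mono_set hball_sub
    have hle : ∫ x in Metric.ball w' r', g (t, x) ≤ ∫ x in D, g (t, x) := by
      apply setIntegral_mono_set hI
      · exact Filter.Eventually.of_forall fun x => mul_self_nonneg _
      · exact HasSubset.Subset.eventuallyLE hball_sub
    have hpos' : 0 < (ε/2) * (volume (Metric.ball w' r')).toReal := by
      apply mul_pos (by linarith)
      exact ENNReal.toReal_pos (Metric.measure_ball_pos volume w' hr'pos).ne'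
        measure_ball_lt_top.ne
    have hfinal : (0:ℝ) < ∫ x in D, g (t, x) := lt_of_lt_of_le hpos' (le_trans hge hle)
    have hz := hzero t
    rw [hhdef] at hz
    linarith
  intro p
  obtain ⟨t, x⟩ := p
  have hx : ZSpan.fract b x ∈ D := ZSpan.fract_mem_fundamentalDomain b x
  have hfl : ((ZSpan.floor b x : E3')) ∈ Submodule.span ℤ (Set.range b) := (ZSpan.floor b x).2
  have hdecomp : x = ZSpan.fract b x + (ZSpan.floor b x : E3') := by
    rw [ZSpan.fract_apply]; abel
  calc f (t, x) = f (t, ZSpan.fract b x + (ZSpan.floor b x : E3')) := by rw [← hdecomp]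
    _ = f (t, ZSpan.fract b x) := hperiod (t, ZSpan.fract b x) _ hfl
    _ = 0 := hsliceD t _ hx

end Main

/-- Let `(L,h,A)` be a Hermitian line bundle with unitary connection on `ℝ × T³`
whose curvature `F(A)` satisfies the anti-self-duality equation `F(A) = -∗F(A)` and is `L²`.
Then `F(A) = 0`, i.e. the connection is flat.

Since `L` has rank one, the curvature is a globally defined `√-1·ℝ`-valued 2-form on
`ℝ × T³ = (ℝ × ℝ³)/Λ₃`, encoded by its (real, lattice-periodic, antisymmetric) component
functions `F μ ν` in the coordinates `(t, x¹, x², x³)`.  Bianchi's identity holds for `F`,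
the ASD equation reads `F₀₁ = -F₂₃`, `F₀₂ = F₁₃`, `F₀₃ = -F₁₂`, and the `L²`-condition is
square-integrability over `ℝ × (fundamental domain of the lattice Λ₃ = ℤ-span of b)`.
The conclusion is that all components of the curvature vanish. -/
theorem rank_one_L2_instanton_is_flat
    (b : Module.Basis (Fin 3) ℝ (EuclideanSpace ℝ (Fin 3)))
    (F : Fin 4 → Fin 4 → (ℝ × EuclideanSpace ℝ (Fin 3) → ℝ))
    (hreg : ∀ μ ν, ContDiff ℝ (⊤ : ℕ∞) (F μ ν))
    (hanti : ∀ μ ν p, F μ ν p = -(F ν μ p))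
    (hper : ∀ μ ν (p : ℝ × EuclideanSpace ℝ (Fin 3)) (n : Fin 3 → ℤ),
      F μ ν (p.1, p.2 + ∑ i, n i • b i) = F μ ν p)
    (hBianchi : ∀ μ ν ρ p,
      pderiv4 μ (F ν ρ) p + pderiv4 ν (F ρ μ) p + pderiv4 ρ (F μ ν) p = 0)
    (hASD₁ : ∀ p, F 0 1 p = -(F 2 3 p))
    (hASD₂ : ∀ p, F 0 2 p = F 1 3 p)
    (hASD₃ : ∀ p, F 0 3 p = -(F 1 2 p))
    (hL2 : ∀ μ ν, Integrable (fun p => F μ ν p ^ 2)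
      ((volume : Measure (ℝ × EuclideanSpace ℝ (Fin 3))).restrict
        (Set.univ ×ˢ ZSpan.fundamentalDomain b))) :
    ∀ μ ν p, F μ ν p = 0 := by
  intro μ ν p
  have hper' : ∀ (q : M3) v, v ∈ Submodule.span ℤ (Set.range b) →
      F μ ν (q.1, q.2 + v) = F μ ν q := by
    intro q v hv
    obtain ⟨n, rfl⟩ := span_explicit b hv
    exact hper μ ν q n
  exact partB b (F μ ν) (hreg μ ν) hper'
    (fun q => harmonic4 F hreg hanti hBianchi hASD₁ hASD₂ hASD₃ μ ν q) (hL2 μ ν) p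
end

section
/- Let f be an L²-section in the kernel of the negative Dirac operator of an L²-finite instanton twisted by ξ, with ‖f‖_{L²} = 1, and set F(t) = ∫_{{t}×T³} |f|². Assume there are K, κ > 0 with F'(t) ≤ -κF(t) for t > K and F'(t) ≥ κF(t) for t < -K. Then |∫_ℝ t·F(t) dt| ≤ 2K + κ⁻¹. -/
/-!
Integrating `κ (t - K) F ≤ -(t - K) F'` over `[K, x]` by parts (the weight `t - K` vanishes
at `K`) gives `κ ∫_K^x (t - K) F ≤ ∫_K^x F - (x - K) F x ≤ ∫_K^∞ F`. This bounds the first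
moment of the right tail and, by monotone convergence, makes it finite; reflecting `t ↦ -t`
treats the left tail. Since `|t| ≤ K + (t - K)⁺ + (-t - K)⁺`, this gives
`∫ |t| F ≤ K + κ⁻¹ (∫_K^∞ F + ∫_{-∞}^{-K} F) ≤ K + κ⁻¹`.
-/

open MeasureTheory Set Filter

theorem max_sub_mul_eq_indicator (F : ℝ → ℝ) (a : ℝ) :
    (fun t => max (t - a) 0 * F t) = (Ioi a).indicator fun t => (t - a) * F t := by
  ext t
  by_cases ht : a < t
  · simp [ht, (sub_pos.2 ht).le]
  · simp [ht, sub_nonpos.2 (not_lt.1 ht)]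

section RightTail

variable {F : ℝ → ℝ} {a κ : ℝ}

theorem intervalIntegral_sub_mul_le_of_deriv_le (hκ : 0 < κ) (hF : ContDiff ℝ 1 F)
    (hnonneg : ∀ t, a ≤ t → 0 ≤ F t) (hdec : ∀ t, a < t → deriv F t ≤ -κ * F t)
    {x : ℝ} (hx : a ≤ x) :
    ∫ t in a..x, (t - a) * F t ≤ κ⁻¹ * ∫ t in a..x, F t := by
  have hF' : Continuous (deriv F) := hF.continuous_deriv le_rfl
  have hFc : Continuous F := hF.continuous
  have ibp : ∫ t in a..x, (t - a) * deriv F t = (x - a) * F x - ∫ t in a..x, F t := by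
    rw [intervalIntegral.integral_mul_deriv_eq_deriv_mul (u := fun t => t - a)
      (fun t _ => (hasDerivAt_id' t).sub_const a)
      (fun t _ => (hF.differentiable one_ne_zero t).hasDerivAt)
      intervalIntegrable_const (hF'.intervalIntegrable a x)]
    simp
  have hmono : ∫ t in a..x, κ * ((t - a) * F t) ≤ ∫ t in a..x, -((t - a) * deriv F t) :=
    intervalIntegral.integral_mono_on_of_le_Ioo hx
      ((by fun_prop : Continuous fun t => κ * ((t - a) * F t)).intervalIntegrable _ _)
      ((by fun_prop : Continuous fun t => -((t - a) * deriv F t)).intervalIntegrable _ _)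
      fun t ht => by nlinarith [hdec t ht.1, ht.1]
  rw [intervalIntegral.integral_const_mul, intervalIntegral.integral_neg, ibp] at hmono
  rw [le_inv_mul_iff₀ hκ]
  nlinarith [mul_nonneg (sub_nonneg.2 hx) (hnonneg x hx)]

variable (hκ : 0 < κ) (hF : ContDiff ℝ 1 F) (hnonneg : ∀ t, a ≤ t → 0 ≤ F t)
  (hint : IntegrableOn F (Ioi a)) (hdec : ∀ t, a < t → deriv F t ≤ -κ * F t)
include hκ hF hnonneg hint hdec

theorem intervalIntegral_sub_mul_le_setIntegral_Ioi {x : ℝ} (hx : a ≤ x) :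
    ∫ t in a..x, (t - a) * F t ≤ κ⁻¹ * ∫ t in Ioi a, F t := by
  refine (intervalIntegral_sub_mul_le_of_deriv_le hκ hF hnonneg hdec hx).trans ?_
  gcongr
  rw [intervalIntegral.integral_of_le hx]
  exact setIntegral_mono_set hint ((ae_restrict_iff' measurableSet_Ioi).2 (ae_of_all _
    fun t ht => hnonneg t (le_of_lt ht))) Ioc_subset_Ioi_self.eventuallyLE

theorem integrableOn_Ioi_sub_mul_of_deriv_le :
    IntegrableOn (fun t => (t - a) * F t) (Ioi a) := by
  refine integrableOn_Ioi_of_intervalIntegral_norm_bounded (κ⁻¹ * ∫ t in Ioi a, F t) a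
    (fun x => (by fun_prop : Continuous fun t => (t - a) * F t).integrableOn_Ioc) tendsto_id
    (eventually_atTop.2 ⟨a, fun x (hx : a ≤ x) => ?_⟩)
  refine le_of_eq_of_le (intervalIntegral.integral_congr fun t ht => ?_)
    (intervalIntegral_sub_mul_le_setIntegral_Ioi hκ hF hnonneg hint hdec hx)
  rw [id, uIcc_of_le hx] at ht
  exact Real.norm_of_nonneg (mul_nonneg (sub_nonneg.2 ht.1) (hnonneg t ht.1))

theorem setIntegral_Ioi_sub_mul_le_of_deriv_le :
    ∫ t in Ioi a, (t - a) * F t ≤ κ⁻¹ * ∫ t in Ioi a, F t :=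
  le_of_tendsto (intervalIntegral_tendsto_integral_Ioi a
      (integrableOn_Ioi_sub_mul_of_deriv_le hκ hF hnonneg hint hdec) tendsto_id)
    (eventually_atTop.2 ⟨a, fun _ hx =>
      intervalIntegral_sub_mul_le_setIntegral_Ioi hκ hF hnonneg hint hdec hx⟩)

theorem integrable_max_sub_mul_of_deriv_le :
    Integrable fun t => max (t - a) 0 * F t := by
  rw [max_sub_mul_eq_indicator, integrable_indicator_iff measurableSet_Ioi]
  exact integrableOn_Ioi_sub_mul_of_deriv_le hκ hF hnonneg hint hdec

theorem integral_max_sub_mul_le_of_deriv_le :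
    ∫ t, max (t - a) 0 * F t ≤ κ⁻¹ * ∫ t in Ioi a, F t := by
  rw [max_sub_mul_eq_indicator, integral_indicator measurableSet_Ioi]
  exact setIntegral_Ioi_sub_mul_le_of_deriv_le hκ hF hnonneg hint hdec

end RightTail

theorem integrableOn_Ioi_comp_neg {F : ℝ → ℝ} {a : ℝ} (hint : IntegrableOn F (Iic (-a))) :
    IntegrableOn (fun t => F (-t)) (Ioi a) := by
  rw [← integrableOn_Ici_iff_integrableOn_Ioi]
  have := ((Measure.measurePreserving_neg volume).integrableOn_comp_preimage
    measurableEmbedding_neg (f := F) (s := Iic (-a))).2 hint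
  rwa [neg_preimage, neg_Iic, neg_neg] at this

section LeftTail

variable {F : ℝ → ℝ} {a κ : ℝ} (hκ : 0 < κ) (hF : ContDiff ℝ 1 F)
  (hnonneg : ∀ t, t ≤ -a → 0 ≤ F t) (hint : IntegrableOn F (Iic (-a)))
  (hinc : ∀ t, t < -a → κ * F t ≤ deriv F t)

include hinc in
theorem deriv_comp_neg_le_of_le_deriv :
    ∀ t, a < t → deriv (fun s => F (-s)) t ≤ -κ * F (-t) := fun t ht => by
  rw [deriv_comp_neg]
  linarith [hinc (-t) (neg_lt_neg ht)]

include hκ hF hnonneg hint hinc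

theorem integrable_max_neg_sub_mul_of_le_deriv :
    Integrable fun t => max (-t - a) 0 * F t := by
  simpa using (integrable_max_sub_mul_of_deriv_le hκ (hF.comp contDiff_neg)
    (fun t ht => hnonneg (-t) (neg_le_neg ht)) (integrableOn_Ioi_comp_neg hint)
    (deriv_comp_neg_le_of_le_deriv hinc)).comp_neg

theorem integral_max_neg_sub_mul_le_of_le_deriv :
    ∫ t, max (-t - a) 0 * F t ≤ κ⁻¹ * ∫ t in Iic (-a), F t := by
  rw [← integral_comp_neg_Ioi, ← integral_neg_eq_self]
  simpa using integral_max_sub_mul_le_of_deriv_le hκ (hF.comp contDiff_neg)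
    (fun t ht => hnonneg (-t) (neg_le_neg ht)) (integrableOn_Ioi_comp_neg hint)
    (deriv_comp_neg_le_of_le_deriv hinc)

end LeftTail

theorem setIntegral_Ioi_add_setIntegral_Iic_le {F : ℝ → ℝ} {a b : ℝ} (hba : b ≤ a)
    (hnonneg : ∀ t, 0 ≤ F t) (hint : Integrable F) :
    (∫ t in Ioi a, F t) + ∫ t in Iic b, F t ≤ ∫ t, F t := by
  rw [← setIntegral_union (Iic_disjoint_Ioi hba).symm measurableSet_Iic hint.integrableOn
    hint.integrableOn]
  exact setIntegral_le_integral hint (ae_of_all _ hnonneg)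

theorem abs_le_add_max_sub_add_max_neg_sub (t K : ℝ) :
    |t| ≤ K + max (t - K) 0 + max (-t - K) 0 := by
  rcases abs_cases t with ⟨h, _⟩ | ⟨h, _⟩ <;>
    linarith [le_max_left (t - K) 0, le_max_right (t - K) 0, le_max_left (-t - K) 0,
      le_max_right (-t - K) 0]

/-- For `f` an `L²`-harmonic spinor of norm one (of the twisted negative Dirac
operator of an `L²`-finite instanton), set `F(t) = ∫_{{t}×T³} |f|²`, so that `F ≥ 0` and
`∫_ℝ F = 1`.  If there are `K, κ > 0` with `F'(t) ≤ -κ F(t)` for `t > K` and `F'(t) ≥ κ F(t)`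
for `t < -K`, then `t ↦ t·F(t)` is integrable and `|∫_ℝ t F(t) dt| ≤ 2K + κ⁻¹`
(this quantity computes the Higgs-field pairing `⟨Φ̂ f, f⟩` up to a factor `2π√-1`). -/
theorem higgs_pairing_bound (F : ℝ → ℝ) (K κ : ℝ) (hK : 0 < K) (hκ : 0 < κ)
    (hC1 : ContDiff ℝ 1 F)
    (hnonneg : ∀ t, 0 ≤ F t)
    (hint : Integrable F (volume : Measure ℝ))
    (hmass : ∫ t, F t = 1)
    (hdec : ∀ t, K < t → deriv F t ≤ -κ * F t)
    (hinc : ∀ t, t < -K → κ * F t ≤ deriv F t) :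
    Integrable (fun t => t * F t) (volume : Measure ℝ) ∧
      |∫ t, t * F t| ≤ 2 * K + κ⁻¹ := by
  have hR := integrable_max_sub_mul_of_deriv_le hκ hC1 (fun t _ => hnonneg t)
    hint.integrableOn hdec
  have hL := integrable_max_neg_sub_mul_of_le_deriv hκ hC1 (fun t _ => hnonneg t)
    hint.integrableOn hinc
  have hdom (t : ℝ) :
      |t * F t| ≤ K * F t + max (t - K) 0 * F t + max (-t - K) 0 * F t := by
    rw [abs_mul, abs_of_nonneg (hnonneg t), ← add_mul, ← add_mul]
    exact mul_le_mul_of_nonneg_right (abs_le_add_max_sub_add_max_neg_sub t K) (hnonneg t)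
  have hmajor := ((hint.const_mul K).add hR).add hL
  have hmoment : Integrable (fun t => t * F t) := hmajor.mono' (by fun_prop) (ae_of_all _ hdom)
  refine ⟨hmoment, ?_⟩
  calc |∫ t, t * F t| ≤ ∫ t, |t * F t| := abs_integral_le_integral_abs
    _ ≤ ∫ t, (K * F t + max (t - K) 0 * F t + max (-t - K) 0 * F t) :=
      integral_mono hmoment.abs hmajor hdom
    _ = K * (∫ t, F t) + (∫ t, max (t - K) 0 * F t) + ∫ t, max (-t - K) 0 * F t := by
      rw [integral_add (f := fun t => K * F t + max (t - K) 0 * F t) ((hint.const_mul K).add hR) hL,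
        integral_add (hint.const_mul K) hR, integral_const_mul]
    _ ≤ K * 1 + κ⁻¹ * ((∫ t in Ioi K, F t) + ∫ t in Iic (-K), F t) := by
      rw [hmass, mul_add]
      linarith [integral_max_sub_mul_le_of_deriv_le hκ hC1 (fun t _ => hnonneg t)
          hint.integrableOn hdec,
        integral_max_neg_sub_mul_le_of_le_deriv hκ hC1 (fun t _ => hnonneg t)
          hint.integrableOn hinc]
    _ ≤ K * 1 + κ⁻¹ * 1 := by
      gcongr
      exact hmass ▸ setIntegral_Ioi_add_setIntegral_Iic_le (by linarith) hnonneg hint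
    _ ≤ 2 * K + κ⁻¹ := by linarith
end

section
/- Let (V,h,A,Φ) be a monopole on an open subset of S¹ × Σ, where Σ is a Riemann surface with Kähler metric. Decompose ∇_A = ∇_{A,t}dt + ∇^{1,0}_A + ∇^{0,1}_A. Then the operator ∂̄_L := (∇_{A,t} - √(-1)Φ)dt + ∇^{0,1}_A satisfies the integrability condition ∂̄_L ∘ ∂̄_L = 0, i.e. [∇_{A,t} - √(-1)Φ, ∇^{0,1}_A] = 0; equivalently, this follows from the Bogomolny equation F(A) = ∗∇_A(Φ). -/
open Matrix

attribute [local instance] Matrix.normedAddCommGroup Matrix.normedSpace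

/-- Directional derivative of a matrix-valued function on `ℝ × ℂ` (local coordinates `(t,w)`,
`w = x + √-1 y`, on `S¹ × Σ`). -/
noncomputable def Dd {n : ℕ} (v : ℝ × ℂ) (f : ℝ × ℂ → Matrix (Fin n) (Fin n) ℂ)
    (p : ℝ × ℂ) : Matrix (Fin n) (Fin n) ℂ :=
  fderiv ℝ f p v


lemma Dd_add_smul {n : ℕ} (v : ℝ × ℂ) (f g : ℝ × ℂ → Matrix (Fin n) (Fin n) ℂ)
    (p : ℝ × ℂ) (hf : DifferentiableAt ℝ f p) (hg : DifferentiableAt ℝ g p) (c : ℂ) :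
    Dd v (fun q => f q + c • g q) p = Dd v f p + c • Dd v g p := by
  unfold Dd
  erw [fderiv_fun_add (g := fun q => c • g q) hf (hg.const_smul c), fderiv_fun_const_smul hg c]
  rfl

lemma Dd_sub_smul {n : ℕ} (v : ℝ × ℂ) (f g : ℝ × ℂ → Matrix (Fin n) (Fin n) ℂ)
    (p : ℝ × ℂ) (hf : DifferentiableAt ℝ f p) (hg : DifferentiableAt ℝ g p) (c : ℂ) :
    Dd v (fun q => f q - c • g q) p = Dd v f p - c • Dd v g p := by
  unfold Dd
  erw [fderiv_fun_sub (g := fun q => c • g q) hf (hg.const_smul c), fderiv_fun_const_smul hg c]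
  rfl

/-- Let `(V,h,A,Φ)` be a monopole on an open subset of `S¹ × Σ`, where `Σ` is a
Riemann surface with a Kähler metric.  Decompose `∇_A = ∇_{A,t} dt + ∇^{1,0}_A + ∇^{0,1}_A`.
Then the operator `∂̄_L := (∇_{A,t} - √-1 Φ) dt + ∇^{0,1}_A` satisfies the integrability
condition `∂̄_L ∘ ∂̄_L = 0`, i.e. `[∇_{A,t} - √-1 Φ, ∇^{0,1}_A] = 0`; this follows from the
Bogomolny equation `F(A) = ∗∇_A(Φ)`.

In local coordinates `(t, w = x + √-1 y)` with the bundle trivialised, the connection is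
`∇ = d + αₜ dt + αₓ dx + α_y dy` and `Φ` is a skew-Hermitian matrix-valued function; the
Bogomolny equation reads `F_{xy} = ∇ₜΦ`, `F_{yt} = ∇ₓΦ`, `F_{tx} = ∇_yΦ`, and the
integrability condition is the vanishing of the commutator of the operators
`∂ₜ + (αₜ - √-1 Φ)` and `∂ₓ + √-1 ∂_y + (αₓ + √-1 α_y)`, namely
`∂ₜ(αₓ + √-1 α_y) - (∂ₓ + √-1 ∂_y)(αₜ - √-1 Φ) + [αₜ - √-1 Φ, αₓ + √-1 α_y] = 0`. -/
theorem monopole_underlying_miniholomorphic_integrability {n : ℕ}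
    (U : Set (ℝ × ℂ)) (hU : IsOpen U)
    (αt αx αy Φ : ℝ × ℂ → Matrix (Fin n) (Fin n) ℂ)
    (hαt : ContDiffOn ℝ (⊤ : ℕ∞) αt U) (hαx : ContDiffOn ℝ (⊤ : ℕ∞) αx U)
    (hαy : ContDiffOn ℝ (⊤ : ℕ∞) αy U) (hΦ : ContDiffOn ℝ (⊤ : ℕ∞) Φ U)
    (hskewt : ∀ p ∈ U, (αt p)ᴴ = -(αt p)) (hskewx : ∀ p ∈ U, (αx p)ᴴ = -(αx p))
    (hskewy : ∀ p ∈ U, (αy p)ᴴ = -(αy p)) (hskewΦ : ∀ p ∈ U, (Φ p)ᴴ = -(Φ p))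
    -- Bogomolny equation `F(A) = ∗∇_A Φ`, componentwise:
    (hBog₁ : ∀ p ∈ U, Dd (0, 1) αy p - Dd (0, Complex.I) αx p + ⁅αx p, αy p⁆
      = Dd (1, 0) Φ p + ⁅αt p, Φ p⁆)
    (hBog₂ : ∀ p ∈ U, Dd (0, Complex.I) αt p - Dd (1, 0) αy p + ⁅αy p, αt p⁆
      = Dd (0, 1) Φ p + ⁅αx p, Φ p⁆)
    (hBog₃ : ∀ p ∈ U, Dd (1, 0) αx p - Dd (0, 1) αt p + ⁅αt p, αx p⁆
      = Dd (0, Complex.I) Φ p + ⁅αy p, Φ p⁆) :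
    ∀ p ∈ U,
      Dd (1, 0) (fun q => αx q + Complex.I • αy q) p
        - (Dd (0, 1) (fun q => αt q - Complex.I • Φ q) p
            + Complex.I • Dd (0, Complex.I) (fun q => αt q - Complex.I • Φ q) p)
        + ⁅αt p - Complex.I • Φ p, αx p + Complex.I • αy p⁆ = 0 := by
  intro p hp
  have hmem := hU.mem_nhds hp
  have dαt : DifferentiableAt ℝ αt p := ((hαt.differentiableOn (by simp)) p hp).differentiableAt hmem
  have dαx : DifferentiableAt ℝ αx p := ((hαx.differentiableOn (by simp)) p hp).differentiableAt hmem
  have dαy : DifferentiableAt ℝ αy p := ((hαy.differentiableOn (by simp)) p hp).differentiableAt hmem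
  have dΦ : DifferentiableAt ℝ Φ p := ((hΦ.differentiableOn (by simp)) p hp).differentiableAt hmem
  rw [Dd_add_smul _ _ _ _ dαx dαy, Dd_sub_smul _ _ _ _ dαt dΦ, Dd_sub_smul _ _ _ _ dαt dΦ]
  have b2 := hBog₂ p hp
  have b3 := hBog₃ p hp
  have key : Dd (1, 0) αx p + Complex.I • Dd (1, 0) αy p
        - (Dd (0, 1) αt p - Complex.I • Dd (0, 1) Φ p
            + Complex.I • (Dd (0, Complex.I) αt p - Complex.I • Dd (0, Complex.I) Φ p))
        + ⁅αt p - Complex.I • Φ p, αx p + Complex.I • αy p⁆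
      = (Dd (1, 0) αx p - Dd (0, 1) αt p + ⁅αt p, αx p⁆
          - (Dd (0, Complex.I) Φ p + ⁅αy p, Φ p⁆))
        - Complex.I • (Dd (0, Complex.I) αt p - Dd (1, 0) αy p + ⁅αy p, αt p⁆
          - (Dd (0, 1) Φ p + ⁅αx p, Φ p⁆)) := by
    simp only [Ring.lie_def, sub_mul, mul_sub, add_mul, mul_add, smul_mul_assoc,
      mul_smul_comm, smul_smul, Complex.I_mul_I, smul_sub, smul_add, neg_smul, one_smul]
    module
  rw [key, b2, b3]
  simp
end
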